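/- The map P(z₁, z̃) = (z₁ - 2i⟨γ, z̃⟩ + 2i‖γ‖², γ) on the Siegel upper half-space satisfies P ∘ P = P, and its range is the image of the complex geodesic φ_γ(ζ) = (ζ + i‖γ‖², γ). -/

import Mathlib

/-!
Since `⟪γ, γ⟫ = ‖γ‖²`, the map `P` fixes every point of the form `(ζ + i‖γ‖², γ)`, and `P` itself
takes values of that form with `ζ = z₁ - 2i⟪γ, z̃⟫ + i‖γ‖²`. This is the whole of idempotence and of
one inclusion. For the other, `Im ζ = Im z₁ - ‖z̃‖² + ‖γ - z̃‖² > 0` on the Siegel domain.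
-/

open Complex
open scoped InnerProductSpace

section SiegelProjection

variable {E : Type*} [NormedAddCommGroup E]

variable (E) in
def siegelDomain : Set (ℂ × E) :=
  {z | ‖z.2‖ ^ 2 < z.1.im}

def siegelGeodesic (γ : E) (ζ : ℂ) : ℂ × E :=
  (ζ + I * (‖γ‖ ^ 2 : ℝ), γ)

theorem siegelGeodesic_mem_siegelDomain (γ : E) {ζ : ℂ} (hζ : 0 < ζ.im) :
    siegelGeodesic γ ζ ∈ siegelDomain E := by
  show ‖γ‖ ^ 2 < (ζ + I * (‖γ‖ ^ 2 : ℝ)).im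
  simpa only [add_im, mul_im, I_re, I_im, ofReal_re, ofReal_im, zero_mul, one_mul, zero_add,
    lt_add_iff_pos_left] using hζ

variable [InnerProductSpace ℂ E]

noncomputable def siegelProj (γ : E) (z : ℂ × E) : ℂ × E :=
  (z.1 - 2 * I * ⟪γ, z.2⟫_ℂ + 2 * I * (‖γ‖ ^ 2 : ℝ), γ)

theorem inner_self_eq_ofReal_norm_sq (γ : E) : ⟪γ, γ⟫_ℂ = ((‖γ‖ ^ 2 : ℝ) : ℂ) := by
  rw [inner_self_eq_norm_sq_to_K]
  push_cast
  rfl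

theorem siegelProj_siegelGeodesic (γ : E) (ζ : ℂ) :
    siegelProj γ (siegelGeodesic γ ζ) = siegelGeodesic γ ζ := by
  simp only [siegelProj, siegelGeodesic, inner_self_eq_ofReal_norm_sq, Prod.mk.injEq, and_true]
  ring

theorem siegelProj_eq_siegelGeodesic (γ : E) (z : ℂ × E) :
    siegelProj γ z = siegelGeodesic γ (z.1 - 2 * I * ⟪γ, z.2⟫_ℂ + I * (‖γ‖ ^ 2 : ℝ)) := by
  simp only [siegelProj, siegelGeodesic, Prod.mk.injEq, and_true]
  ring

theorem siegelProj_siegelProj (γ : E) (z : ℂ × E) :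
    siegelProj γ (siegelProj γ z) = siegelProj γ z := by
  rw [siegelProj_eq_siegelGeodesic γ z, siegelProj_siegelGeodesic]

theorem im_sub_two_I_mul_inner_add_I_mul_norm_sq (γ : E) (z : ℂ × E) :
    (z.1 - 2 * I * ⟪γ, z.2⟫_ℂ + I * (‖γ‖ ^ 2 : ℝ)).im = z.1.im - ‖z.2‖ ^ 2 + ‖γ - z.2‖ ^ 2 := by
  simp only [norm_sub_sq (𝕜 := ℂ), RCLike.re_to_complex, add_im, sub_im, mul_im, mul_re, I_re,
    I_im, ofReal_re, ofReal_im, re_ofNat, im_ofNat]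
  ring

theorem siegelProj_image_siegelDomain (γ : E) :
    siegelProj γ '' siegelDomain E = siegelGeodesic γ '' {ζ : ℂ | 0 < ζ.im} := by
  apply Set.Subset.antisymm
  · rintro _ ⟨z, hz, rfl⟩
    refine ⟨_, ?_, (siegelProj_eq_siegelGeodesic γ z).symm⟩
    have hz : ‖z.2‖ ^ 2 < z.1.im := hz
    show 0 < (z.1 - 2 * I * ⟪γ, z.2⟫_ℂ + I * (‖γ‖ ^ 2 : ℝ)).im
    rw [im_sub_two_I_mul_inner_add_I_mul_norm_sq]
    linarith [sq_nonneg ‖γ - z.2‖]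
  · rintro _ ⟨ζ, hζ, rfl⟩
    exact ⟨_, siegelGeodesic_mem_siegelDomain γ hζ, siegelProj_siegelGeodesic γ ζ⟩

end SiegelProjection

theorem projection_idempotent_range (m : ℕ) (γ : EuclideanSpace ℂ (Fin m)) :
    (∀ z : ℂ × EuclideanSpace ℂ (Fin m), ‖z.2‖ ^ 2 < z.1.im →
      (fun z : ℂ × EuclideanSpace ℂ (Fin m) =>
          ((z.1 - 2 * I * ⟪γ, z.2⟫_ℂ + 2 * I * (‖γ‖ ^ 2 : ℝ)), γ))
        (((z.1 - 2 * I * ⟪γ, z.2⟫_ℂ + 2 * I * (‖γ‖ ^ 2 : ℝ)), γ)) =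
        (((z.1 - 2 * I * ⟪γ, z.2⟫_ℂ + 2 * I * (‖γ‖ ^ 2 : ℝ)), γ))) ∧
    (fun z : ℂ × EuclideanSpace ℂ (Fin m) =>
        ((z.1 - 2 * I * ⟪γ, z.2⟫_ℂ + 2 * I * (‖γ‖ ^ 2 : ℝ)), γ)) ''
        {z : ℂ × EuclideanSpace ℂ (Fin m) | ‖z.2‖ ^ 2 < z.1.im} =
      (fun ζ : ℂ => ((ζ + I * (‖γ‖ ^ 2 : ℝ), γ) : ℂ × EuclideanSpace ℂ (Fin m))) ''
        {ζ : ℂ | 0 < ζ.im} :=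
  ⟨fun z _ => siegelProj_siegelProj γ z, siegelProj_image_siegelDomain γ⟩
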